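/- arXiv:1605.07432 — 2 statements merged into one kernel-verified Lean document; each statement's English description precedes it below -/
import Mathlib

section
/- Let 0 ≤ γ < α < 1 (or more generally γ < α with α > 0) and let f : (a,b] → ℝ be such that (t-a)^γ f(t) extends continuously to [a,b]. Then the Riemann–Liouville fractional integral I_a^α f(t) = (1/Γ(α)) ∫_a^t f(s)/(t-s)^{1-α} ds tends to 0 as t → a⁺. -/
open Real MeasureTheory Set Filter Topology

/-- Riemann–Liouville left-sided fractional integral of order `α` based at `a`. -/
noncomputable def RLI (a α : ℝ) (f : ℝ → ℝ) (t : ℝ) : ℝ :=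
  (1 / Real.Gamma α) * ∫ s in a..t, (t - s) ^ (α - 1) * f s

/-!
Write `f s = (s - a) ^ (-γ) * g s` with `|g| ≤ M`. If `γ < 1`, the substitution
`s = a + (t - a) u` bounds `|RLI a α f t|` by `M B(1 - γ, α) (t - a) ^ (α - γ) / |Γ(α)|`.
If `γ ≥ 1` then `α > 1`, so the kernel is bounded by `(b - a) ^ (α - 1)` and `|RLI a α f t|` is
dominated by the primitive of `|f|` at `t`, which vanishes at `a` — unless `f` is not integrable
near `a`, in which case the integral defining `RLI a α f t` takes its junk value `0` for every `t`.
-/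

section Weighted

variable {a b γ : ℝ} {f g : ℝ → ℝ}

lemma eq_rpow_neg_mul_of_weighted (hgf : ∀ t ∈ Ioc a b, g t = (t - a) ^ γ * f t)
    {s : ℝ} (hs : s ∈ Ioc a b) : f s = (s - a) ^ (-γ) * g s := by
  rw [hgf s hs, ← mul_assoc, ← rpow_add (sub_pos.2 hs.1), neg_add_cancel, rpow_zero, one_mul]

lemma continuousOn_Ioc_of_weighted (hg : ContinuousOn g (Icc a b))
    (hgf : ∀ t ∈ Ioc a b, g t = (t - a) ^ γ * f t) : ContinuousOn f (Ioc a b) := by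
  have hweight : ContinuousOn (fun s => (s - a) ^ (-γ)) (Ioc a b) :=
    (continuousOn_id.sub continuousOn_const).rpow_const fun s hs =>
      Or.inl (sub_ne_zero_of_ne hs.1.ne')
  exact (hweight.mul (hg.mono Ioc_subset_Icc_self)).congr
    fun s hs => eq_rpow_neg_mul_of_weighted hgf hs

lemma exists_abs_le_rpow_neg_of_weighted (hg : ContinuousOn g (Icc a b))
    (hgf : ∀ t ∈ Ioc a b, g t = (t - a) ^ γ * f t) :
    ∃ M, ∀ s ∈ Ioc a b, |f s| ≤ M * (s - a) ^ (-γ) := by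
  obtain ⟨M, hM⟩ := isCompact_Icc.exists_bound_of_continuousOn hg
  refine ⟨M, fun s hs => ?_⟩
  have hweight : 0 ≤ (s - a) ^ (-γ) := rpow_nonneg (sub_pos.2 hs.1).le _
  rw [eq_rpow_neg_mul_of_weighted hgf hs, abs_mul, abs_of_nonneg hweight, mul_comm]
  exact mul_le_mul_of_nonneg_right (hM s (Ioc_subset_Icc_self hs)) hweight

end Weighted

section Beta

variable {a t p q : ℝ}

lemma intervalIntegrable_sub_rpow_mul_sub_rpow (hat : a < t) (hp : -1 < p) (hq : -1 < q) :
    IntervalIntegrable (fun s => (s - a) ^ p * (t - s) ^ q) volume a t := by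
  set m := (a + t) / 2
  have ham : a < m := by simp only [m]; linarith
  have hmt : m < t := by simp only [m]; linarith
  have hleft : IntervalIntegrable (fun s => (s - a) ^ p * (t - s) ^ q) volume a m := by
    have hsing : IntervalIntegrable (fun s => (s - a) ^ p) volume a m := by
      simpa using
        (intervalIntegral.intervalIntegrable_rpow' (a := 0) (b := m - a) hp).comp_sub_right a
    refine hsing.mul_continuousOn <| (continuousOn_const.sub continuousOn_id).rpow_const
      fun s hs => Or.inl (sub_ne_zero_of_ne ?_)
    rw [uIcc_of_le ham.le] at hs
    exact (hs.2.trans_lt hmt).ne'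
  have hright : IntervalIntegrable (fun s => (s - a) ^ p * (t - s) ^ q) volume m t := by
    have hsing : IntervalIntegrable (fun s => (t - s) ^ q) volume m t := by
      simpa using
        (intervalIntegral.intervalIntegrable_rpow' (a := t - m) (b := 0) hq).comp_sub_left t
    refine hsing.continuousOn_mul <| (continuousOn_id.sub continuousOn_const).rpow_const
      fun s hs => Or.inl (sub_ne_zero_of_ne ?_)
    rw [uIcc_of_le hmt.le] at hs
    exact (ham.trans_le hs.1).ne'
  exact hleft.trans hright

lemma integral_sub_rpow_mul_sub_rpow (hat : a < t) :
    ∫ s in a..t, (s - a) ^ p * (t - s) ^ q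
      = (t - a) ^ (p + q + 1) * ∫ u in (0:ℝ)..1, u ^ p * (1 - u) ^ q := by
  have hc : 0 < t - a := sub_pos.2 hat
  have hsubst := intervalIntegral.integral_comp_mul_add
    (fun s => (s - a) ^ p * (t - s) ^ q) hc.ne' a (a := 0) (b := 1)
  simp only [mul_zero, zero_add, mul_one, sub_add_cancel, smul_eq_mul] at hsubst
  have hscaled : ∫ u in (0:ℝ)..1, ((t - a) * u + a - a) ^ p * (t - ((t - a) * u + a)) ^ q
      = (t - a) ^ (p + q) * ∫ u in (0:ℝ)..1, u ^ p * (1 - u) ^ q := by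
    rw [← intervalIntegral.integral_const_mul]
    refine intervalIntegral.integral_congr fun u hu => ?_
    rw [uIcc_of_le zero_le_one] at hu
    rw [add_sub_cancel_right, show t - ((t - a) * u + a) = (t - a) * (1 - u) by ring,
      mul_rpow hc.le hu.1, mul_rpow hc.le (sub_nonneg.2 hu.2), rpow_add hc]
    ring
  rw [hscaled, eq_inv_mul_iff_mul_eq₀ hc.ne'] at hsubst
  rw [← hsubst, rpow_add_one hc.ne']
  ring

end Beta

section RiemannLiouville

variable {a b α γ M : ℝ} {f : ℝ → ℝ}

lemma abs_RLI_le_of_abs_le_rpow_neg (hα : 0 < α) (hγ : γ < 1) {t : ℝ} (hat : a < t)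
    (hf : ∀ s ∈ Ioc a t, |f s| ≤ M * (s - a) ^ (-γ)) :
    |RLI a α f t| ≤ |1 / Gamma α| * M * (∫ u in (0:ℝ)..1, u ^ (-γ) * (1 - u) ^ (α - 1))
      * (t - a) ^ (α - γ) := by
  have hcmp := intervalIntegrable_sub_rpow_mul_sub_rpow hat (p := -γ) (q := α - 1)
    (by linarith) (by linarith)
  have hint : |∫ s in a..t, (t - s) ^ (α - 1) * f s|
      ≤ ∫ s in a..t, M * ((s - a) ^ (-γ) * (t - s) ^ (α - 1)) := by
    refine (norm_eq_abs _).symm.trans_le <| intervalIntegral.norm_integral_le_of_norm_le hat.le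
      (Eventually.of_forall fun s hs => ?_) (hcmp.const_mul M)
    have hts : 0 ≤ (t - s) ^ (α - 1) := rpow_nonneg (sub_nonneg.2 hs.2) _
    rw [norm_mul, norm_of_nonneg hts, norm_eq_abs]
    calc (t - s) ^ (α - 1) * |f s| ≤ (t - s) ^ (α - 1) * (M * (s - a) ^ (-γ)) :=
          mul_le_mul_of_nonneg_left (hf s hs) hts
      _ = M * ((s - a) ^ (-γ) * (t - s) ^ (α - 1)) := by ring
  rw [intervalIntegral.integral_const_mul, integral_sub_rpow_mul_sub_rpow hat,
    show -γ + (α - 1) + 1 = α - γ by ring] at hint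
  rw [RLI, abs_mul]
  calc |1 / Gamma α| * |∫ s in a..t, (t - s) ^ (α - 1) * f s|
      ≤ |1 / Gamma α| * (M * ((t - a) ^ (α - γ)
          * ∫ u in (0:ℝ)..1, u ^ (-γ) * (1 - u) ^ (α - 1))) :=
        mul_le_mul_of_nonneg_left hint (abs_nonneg _)
    _ = _ := by ring

lemma tendsto_sub_rpow_nhdsGT (a : ℝ) {p : ℝ} (hp : 0 < p) :
    Tendsto (fun t => (t - a) ^ p) (𝓝[>] a) (𝓝 0) := by
  have := ((continuous_sub_right a).continuousAt (x := a)).rpow_const (p := p) (Or.inr hp.le)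
  simpa [ContinuousAt, zero_rpow hp.ne'] using this.tendsto.mono_left nhdsWithin_le_nhds

lemma tendsto_RLI_of_abs_le_rpow_neg (hα : 0 < α) (hγ : γ < 1) (hγα : γ < α) (hab : a < b)
    (hf : ∀ s ∈ Ioc a b, |f s| ≤ M * (s - a) ^ (-γ)) :
    Tendsto (RLI a α f) (𝓝[>] a) (𝓝 0) := by
  have hbound := (tendsto_sub_rpow_nhdsGT a (sub_pos.2 hγα)).const_mul
    (|1 / Gamma α| * M * ∫ u in (0:ℝ)..1, u ^ (-γ) * (1 - u) ^ (α - 1))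
  rw [mul_zero] at hbound
  refine squeeze_zero_norm' ?_ hbound
  filter_upwards [Ioc_mem_nhdsGT hab] with t ht
  exact abs_RLI_le_of_abs_le_rpow_neg hα hγ ht.1
    fun s hs => hf s ⟨hs.1, hs.2.trans ht.2⟩

lemma tendsto_RLI_of_intervalIntegrable (hα : 1 ≤ α) (hab : a < b)
    (hf : IntervalIntegrable f volume a b) : Tendsto (RLI a α f) (𝓝[>] a) (𝓝 0) := by
  set P := fun t => ∫ s in a..t, (b - a) ^ (α - 1) * |f s|
  have hP : Tendsto P (𝓝[>] a) (𝓝 0) := by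
    have hcont := intervalIntegral.continuousWithinAt_primitive (measure_singleton a)
      (a := a) (b₁ := a) (b₂ := b) (by simpa [hab.le] using hf.abs.const_mul ((b - a) ^ (α - 1)))
    rw [← nhdsWithin_Ioc_eq_nhdsGT hab]
    simpa [P] using (hcont.mono Ioc_subset_Icc_self).tendsto
  have hbound := hP.const_mul |1 / Gamma α|
  rw [mul_zero] at hbound
  refine squeeze_zero_norm' ?_ hbound
  filter_upwards [Ioc_mem_nhdsGT hab] with t ht
  rw [RLI, norm_mul, norm_eq_abs]
  refine mul_le_mul_of_nonneg_left (intervalIntegral.norm_integral_le_of_norm_le ht.1.le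
    (Eventually.of_forall fun s hs => ?_) ?_) (abs_nonneg _)
  · have hts : 0 ≤ t - s := sub_nonneg.2 hs.2
    rw [norm_mul, norm_of_nonneg (rpow_nonneg hts _), norm_eq_abs]
    exact mul_le_mul_of_nonneg_right
      (rpow_le_rpow hts (by linarith [hs.1, ht.2]) (by linarith)) (abs_nonneg _)
  · exact (hf.abs.const_mul _).mono_set (uIcc_subset_uIcc_left (by
      rw [uIcc_of_le hab.le]; exact Ioc_subset_Icc_self ht))

/-- Away from `t` the kernel is continuous and nonvanishing, so the integrand is not
integrable either, and the integral takes its junk value. -/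
lemma RLI_eq_zero_of_not_intervalIntegrable (hfc : ContinuousOn f (Ioc a b))
    (hf : ¬ IntervalIntegrable f volume a b) {t : ℝ} (ht : t ∈ Ioc a b) : RLI a α f t = 0 := by
  obtain ⟨hat, htb⟩ := ht
  suffices ¬ IntervalIntegrable (fun s => (t - s) ^ (α - 1) * f s) volume a t by
    rw [RLI, intervalIntegral.integral_undef this, mul_zero]
  intro hint
  set m := (a + t) / 2
  have ham : a < m := by simp only [m]; linarith
  have hmt : m < t := by simp only [m]; linarith
  have hleft : IntervalIntegrable f volume a m := by
    have hmul := (hint.mono_set (uIcc_subset_uIcc_left (by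
      rw [uIcc_of_le hat.le]; exact ⟨ham.le, hmt.le⟩))).continuousOn_mul
      (g := fun s => (t - s) ^ (1 - α)) <| (continuousOn_const.sub continuousOn_id).rpow_const
        fun s hs => Or.inl (sub_ne_zero_of_ne ?_)
    · refine hmul.congr fun s hs => ?_
      rw [uIoc_of_le ham.le] at hs
      rw [← mul_assoc, ← rpow_add (sub_pos.2 (hs.2.trans_lt hmt)), sub_add_sub_cancel,
        sub_self, rpow_zero, one_mul]
    · rw [uIcc_of_le ham.le] at hs
      exact (hs.2.trans_lt hmt).ne'
  have hright : IntervalIntegrable f volume m b :=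
    (hfc.mono fun s hs => ?_).intervalIntegrable
  · exact hf (hleft.trans hright)
  · rw [uIcc_of_le (hmt.le.trans htb)] at hs
    exact ⟨ham.trans_le hs.1, hs.2⟩

end RiemannLiouville

theorem stmt_0 (a b α γ : ℝ) (f : ℝ → ℝ) (hab : a < b)
    (hγ : 0 ≤ γ) (hγα : γ < α)
    (hf : ∃ g : ℝ → ℝ, ContinuousOn g (Set.Icc a b) ∧
      ∀ t ∈ Set.Ioc a b, g t = (t - a) ^ γ * f t) :
    Tendsto (RLI a α f) (nhdsWithin a (Set.Ioi a)) (nhds 0) := by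
  obtain ⟨g, hg, hgf⟩ := hf
  rcases lt_or_ge γ 1 with hγ1 | hγ1
  · obtain ⟨M, hM⟩ := exists_abs_le_rpow_neg_of_weighted hg hgf
    exact tendsto_RLI_of_abs_le_rpow_neg (hγ.trans_lt hγα) hγ1 hγα hab hM
  · by_cases hfi : IntervalIntegrable f volume a b
    · exact tendsto_RLI_of_intervalIntegrable (by linarith) hab hfi
    · refine tendsto_nhds_of_eventually_eq ?_
      filter_upwards [Ioc_mem_nhdsGT hab] with t ht
      exact RLI_eq_zero_of_not_intervalIntegrable (continuousOn_Ioc_of_weighted hg hgf) hfi ht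
end

section
/- Let γ > -1 and m > 1, and let b ≥ 0. Then there is no nontrivial function y ∈ C¹([0,∞)) with y(0) = b satisfying y'(t) ≥ t^γ |y(t)|^m for all t > 0. Equivalently, any global solution of this differential inequality must be identically zero. -/
/-!
Since `y' ≥ 0`, `y` is nondecreasing, so `y ≥ y 0 = b ≥ 0`, and once `y t > 0` we have `y > 0` on
`[t, ∞)`. There the inequality `y' y^{-m} ≥ s^γ` integrates to the statement that
`y^{1-m}(s) + (m-1)/(γ+1) · s^{γ+1}` is nonincreasing; as `s^{γ+1} → ∞` this forces the positive
quantity `y^{1-m}` to become negative, i.e. `y` blows up in finite time.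
-/

open Real Set Filter Topology

section

variable {γ m a : ℝ} {y : ℝ → ℝ}

lemma antitoneOn_rpow_one_sub_add_rpow (hγ : 0 < γ + 1) (hm : 1 ≤ m) (ha : 0 ≤ a)
    (hcont : ContinuousOn y (Ici a)) (hdiff : ∀ t > a, DifferentiableAt ℝ y t)
    (hpos : ∀ t ≥ a, 0 < y t) (hineq : ∀ t > a, t ^ γ * y t ^ m ≤ deriv y t) :
    AntitoneOn (fun t ↦ y t ^ (1 - m) + (m - 1) / (γ + 1) * t ^ (γ + 1)) (Ici a) := by
  refine antitoneOn_of_hasDerivWithinAt_nonpos (convex_Ici a)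
    (f' := fun t ↦ (1 - m) * (deriv y t * y t ^ (-m) - t ^ γ)) ?_ (fun t ht ↦ ?_) (fun t ht ↦ ?_)
  · exact (hcont.rpow_const fun t ht ↦ Or.inl (hpos t ht).ne').add
      (continuous_const.mul (continuous_id.rpow_const fun _ ↦ Or.inr hγ.le)).continuousOn
  · rw [interior_Ici] at ht ⊢
    have hpow := (hdiff t ht).hasDerivAt.rpow_const (p := 1 - m) (Or.inl (hpos t ht.le).ne')
    have hmon := (hasDerivAt_rpow_const (p := γ + 1) (Or.inl (ha.trans_lt ht).ne')).const_mul
      ((m - 1) / (γ + 1))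
    refine (hpow.add hmon).hasDerivWithinAt.congr_deriv ?_
    rw [show 1 - m - 1 = -m by ring, show γ + 1 - 1 = γ by ring]
    field_simp
    ring
  · rw [interior_Ici] at ht
    have hym : 0 < y t ^ m := rpow_pos_of_pos (hpos t ht.le) m
    have hdiv : t ^ γ ≤ deriv y t * y t ^ (-m) := by
      rw [rpow_neg (hpos t ht.le).le, ← div_eq_mul_inv, le_div_iff₀ hym]
      exact hineq t ht
    exact mul_nonpos_of_nonpos_of_nonneg (by linarith) (by linarith)

lemma not_forall_pos_of_rpow_mul_rpow_le_deriv (hγ : -1 < γ) (hm : 1 < m) (ha : 0 ≤ a)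
    (hcont : ContinuousOn y (Ici a)) (hdiff : ∀ t > a, DifferentiableAt ℝ y t)
    (hineq : ∀ t > a, t ^ γ * y t ^ m ≤ deriv y t) : ¬ ∀ t ≥ a, 0 < y t := by
  intro hpos
  have hγ' : 0 < γ + 1 := by linarith
  set g := fun t ↦ y t ^ (1 - m) + (m - 1) / (γ + 1) * t ^ (γ + 1)
  have hanti : AntitoneOn g (Ici a) :=
    antitoneOn_rpow_one_sub_add_rpow hγ' hm.le ha hcont hdiff hpos hineq
  have htend : Tendsto (fun t ↦ (m - 1) / (γ + 1) * t ^ (γ + 1)) atTop atTop :=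
    (tendsto_rpow_atTop hγ').const_mul_atTop (div_pos (by linarith) hγ')
  obtain ⟨T, hT, haT⟩ := ((htend.eventually_gt_atTop (g a)).and (eventually_ge_atTop a)).exists
  have hgT : g T ≤ g a := hanti self_mem_Ici haT haT
  have hyT : 0 < y T ^ (1 - m) := rpow_pos_of_pos (hpos T haT) _
  linarith [show g T = y T ^ (1 - m) + (m - 1) / (γ + 1) * T ^ (γ + 1) from rfl]

end

theorem stmt_7 (γ m b : ℝ) (hγ : -1 < γ) (hm : 1 < m) (hb : 0 ≤ b)
    (y : ℝ → ℝ)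
    (hy : ContDiffOn ℝ 1 y (Set.Ici 0))
    (hy0 : y 0 = b)
    (hineq : ∀ t > (0 : ℝ), t ^ γ * |y t| ^ m ≤ deriv y t) :
    ∀ t ≥ (0 : ℝ), y t = 0 := by
  have hdiff : ∀ t > (0 : ℝ), DifferentiableAt ℝ y t := fun t ht ↦
    (hy.differentiableOn one_ne_zero t ht.le).differentiableAt (Ici_mem_nhds ht)
  have hmono : MonotoneOn y (Ici 0) := by
    refine monotoneOn_of_deriv_nonneg (convex_Ici 0) hy.continuousOn ?_ ?_ <;> rw [interior_Ici]
    · exact fun t ht ↦ (hdiff t ht).differentiableWithinAt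
    · exact fun t ht ↦ (mul_nonneg (rpow_nonneg ht.le _)
        (rpow_nonneg (abs_nonneg _) _)).trans (hineq t ht)
  intro t ht
  by_contra hne
  have hyt : 0 < y t := (Ne.symm hne).lt_of_le ((hy0 ▸ hb).trans (hmono self_mem_Ici ht ht))
  have hpos : ∀ s ≥ t, 0 < y s := fun s hs ↦
    hyt.trans_le (hmono ht (mem_Ici.2 (ht.trans hs)) hs)
  refine not_forall_pos_of_rpow_mul_rpow_le_deriv hγ hm ht
    (hy.continuousOn.mono (Ici_subset_Ici.2 ht)) (fun s hs ↦ hdiff s (ht.trans_lt hs))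
    (fun s hs ↦ ?_) hpos
  simpa only [abs_of_pos (hpos s hs.le)] using hineq s (ht.trans_lt hs)
end
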